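/- arXiv:1904.08844 — 2 statements merged into one kernel-verified Lean document; each statement's English description precedes it below -/
import Mathlib

section
/- Suppose the Brascamp-Lieb inequality $\left|\int_{\mathbb{R}^m} \prod_{j=1}^n F_j(I_j x)\,dx\right| \le C \prod_{j=1}^n \|F_j\|_{L^{p_j}}$ holds for all Schwartz functions $F_j$, with $p_1 < \infty$. Then the linear map $I_1 : \mathbb{R}^m \to \mathbb{R}^{k_1}$ is surjective, provided the form is not identically zero on Schwartz tuples. -/
open ENNReal MeasureTheory

/-!
If `I₀` misses a direction, pick a linear form `φ` vanishing on its range and a linear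
automorphism `S` of the target which fixes that range and has determinant `t`
(a dilatransvection `x ↦ x + φ x • v`). Replacing `F₀` by `F₀ ∘ S` leaves the form unchanged,
but divides `‖F₀‖_{p₀}` by `t ^ (1 / p₀)`. Letting `t → ∞` forces the form to vanish on every
Schwartz tuple.
-/

theorem LinearMap.exists_linearEquiv_det_eq_forall_apply_eq
    {K V W : Type*} [Field K] [AddCommGroup V] [Module K V] [AddCommGroup W] [Module K W]
    [FiniteDimensional K W] {f : V →ₗ[K] W} (hf : ¬Function.Surjective f) {c : K} (hc : c ≠ 0) :
    ∃ S : W ≃ₗ[K] W, LinearMap.det (S : W →ₗ[K] W) = c ∧ ∀ x, S (f x) = f x := by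
  obtain ⟨y, hy⟩ : ∃ y, y ∉ LinearMap.range f := by simpa [Function.Surjective] using hf
  obtain ⟨φ, hφy, hφf⟩ := Submodule.exists_dual_map_eq_bot_of_notMem hy inferInstance
  have hφ (x : V) : φ (f x) = 0 :=
    (Submodule.mem_bot K).1 (hφf ▸ Submodule.mem_map_of_mem (LinearMap.mem_range_self f x))
  set v := ((c - 1) / φ y) • y
  have hφv : 1 + φ v = c := by simp [v, hφy]
  refine ⟨LinearEquiv.dilatransvection (f := φ) (v := v) (by simpa [hφv] using hc), ?_, ?_⟩
  · simp [LinearEquiv.dilatransvection.coe_toLinearMap, hφv]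
  · simp [LinearEquiv.dilatransvection.apply, hφ]

theorem eLpNorm_comp_linearEquiv {E F : Type*} [NormedAddCommGroup E] [NormedSpace ℝ E]
    [MeasurableSpace E] [BorelSpace E] [FiniteDimensional ℝ E] [NormedAddCommGroup F]
    (μ : Measure E) [μ.IsAddHaarMeasure] (S : E ≃ₗ[ℝ] E) {f : E → F}
    (hf : AEStronglyMeasurable f μ) {q : ℝ≥0∞} (hq : q ≠ ∞) :
    eLpNorm (f ∘ S) q μ
      = ENNReal.ofReal |(LinearMap.det (S : E →ₗ[ℝ] E))⁻¹| ^ (1 / q).toReal * eLpNorm f q μ := by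
  have hmap := μ.map_linearMap_addHaar_eq_smul_addHaar (LinearEquiv.isUnit_det' S).ne_zero
  have hS : AEMeasurable S μ := (S : E →ₗ[ℝ] E).continuous_of_finiteDimensional.aemeasurable
  rw [LinearEquiv.coe_coe] at hmap
  rw [← eLpNorm_map_measure (by rw [hmap]; exact hf.smul_measure _) hS, hmap,
    eLpNorm_smul_measure_of_ne_top hq, smul_eq_mul]

theorem nonpos_of_forall_le_rpow_neg_mul {a r K : ℝ} (hr : 0 < r)
    (h : ∀ t : ℝ, 0 < t → a ≤ t ^ (-r) * K) : a ≤ 0 := by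
  have hlim : Filter.Tendsto (fun t : ℝ ↦ t ^ (-r) * K) Filter.atTop (nhds 0) := by
    simpa using (tendsto_rpow_neg_atTop hr).mul_const K
  exact ge_of_tendsto hlim (Filter.eventually_gt_atTop 0 |>.mono h)

section Scaling

variable {ι X : Type*} [Fintype ι] [MeasurableSpace X] {ν : Measure X}
  {E : ι → Type*} [∀ j, NormedAddCommGroup (E j)] [∀ j, NormedSpace ℝ (E j)]
  [∀ j, MeasurableSpace (E j)] [∀ j, BorelSpace (E j)] [∀ j, FiniteDimensional ℝ (E j)]
  {μ : ∀ j, Measure (E j)} [∀ j, (μ j).IsAddHaarMeasure]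

theorem norm_integral_prod_le_rpow_neg_mul_of_det_eq {I : ∀ j, X → E j} {p : ι → ℝ≥0∞} {C : ℝ}
    (hBL : ∀ F : ∀ j, SchwartzMap (E j) ℂ,
      ‖∫ x, ∏ j, F j (I j x) ∂ν‖ ≤ C * ∏ j, (eLpNorm (F j) (p j) (μ j)).toReal)
    (F : ∀ j, SchwartzMap (E j) ℂ) {i : ι} (hpi : p i ≠ ∞) (S : E i ≃ₗ[ℝ] E i)
    (hS : ∀ x, S (I i x) = I i x) {t : ℝ} (ht : 0 < t)
    (hdet : LinearMap.det (S : E i →ₗ[ℝ] E i) = t) :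
    ‖∫ x, ∏ j, F j (I j x) ∂ν‖
      ≤ t ^ (-(1 / p i).toReal) * (C * ∏ j, (eLpNorm (F j) (p j) (μ j)).toReal) := by
  classical
  set G := SchwartzMap.compCLMOfContinuousLinearEquiv ℝ S.toContinuousLinearEquiv (F i)
  have hG : ⇑G = F i ∘ S := rfl
  have hintegrand (x : X) : ∏ j, Function.update F i G j (I j x) = ∏ j, F j (I j x) := by
    rw [Finset.prod_congr rfl fun j _ ↦
      Function.apply_update (fun j (g : SchwartzMap (E j) ℂ) ↦ g (I j x)) F i G j]
    rw [Function.update_eq_self_iff.2 (by simp [hG, hS])]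
  have hnormG : (eLpNorm G (p i) (μ i)).toReal
      = t ^ (-(1 / p i).toReal) * (eLpNorm (F i) (p i) (μ i)).toReal := by
    rw [hG, eLpNorm_comp_linearEquiv _ _ (F i).continuous.aestronglyMeasurable hpi, hdet,
      toReal_mul, ← toReal_rpow, toReal_ofReal (abs_nonneg _), abs_inv, abs_of_pos ht,
      Real.inv_rpow ht.le, Real.rpow_neg ht.le]
  calc ‖∫ x, ∏ j, F j (I j x) ∂ν‖ = ‖∫ x, ∏ j, Function.update F i G j (I j x) ∂ν‖ := by
        simp_rw [hintegrand]
    _ ≤ C * ∏ j, (eLpNorm (Function.update F i G j) (p j) (μ j)).toReal := hBL _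
    _ = t ^ (-(1 / p i).toReal) * (C * ∏ j, (eLpNorm (F j) (p j) (μ j)).toReal) := by
        rw [Finset.prod_congr rfl fun j _ ↦ Function.apply_update
            (fun j (g : SchwartzMap (E j) ℂ) ↦ (eLpNorm g (p j) (μ j)).toReal) F i G j,
          Finset.prod_update_of_mem (Finset.mem_univ i), hnormG,
          Finset.prod_eq_mul_prod_sdiff_singleton_of_mem (Finset.mem_univ i)]
        ring

end Scaling

theorem brascamp_lieb_surjectivity_general
    (m n : ℕ) (k : Fin n → ℕ)
    (I : ∀ j : Fin n, (Fin m → ℝ) →ₗ[ℝ] (Fin (k j) → ℝ))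
    (p : Fin n → ℝ≥0∞) (hp : ∀ j, 1 ≤ p j)
    (h0 : Fin n) (hpfin : p h0 < ⊤)
    (C : ℝ)
    (hBL : ∀ F : ∀ j : Fin n, SchwartzMap (Fin (k j) → ℝ) ℂ,
      ‖∫ x : Fin m → ℝ, ∏ j : Fin n, F j (I j x)‖
        ≤ C * ∏ j : Fin n, (eLpNorm (⇑(F j)) (p j) volume).toReal)
    (hnz : ∃ F : ∀ j : Fin n, SchwartzMap (Fin (k j) → ℝ) ℂ,
      (∫ x : Fin m → ℝ, ∏ j : Fin n, F j (I j x)) ≠ 0) :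
    Function.Surjective (I h0) := by
  obtain ⟨F, hF⟩ := hnz
  by_contra hsurj
  have hr : 0 < (1 / p h0).toReal :=
    toReal_pos (by simpa using hpfin.ne) (by simpa using (zero_lt_one.trans_le (hp h0)).ne')
  refine hF (norm_le_zero_iff.1 ?_)
  apply nonpos_of_forall_le_rpow_neg_mul hr
  intro t ht
  obtain ⟨S, hdet, hS⟩ := (I h0).exists_linearEquiv_det_eq_forall_apply_eq hsurj ht.ne'
  exact norm_integral_prod_le_rpow_neg_mul_of_det_eq hBL F hpfin.ne S hS ht hdet

/-- If a Brascamp–Lieb inequality holds with `p 0 < ∞` and the form is not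
identically zero on Schwartz tuples, then `I 0` is surjective. -/
theorem brascamp_lieb_surjectivity
    (m n : ℕ) (k : Fin n → ℕ)
    (I : ∀ j : Fin n, (Fin m → ℝ) →ₗ[ℝ] (Fin (k j) → ℝ))
    (p : Fin n → ℝ≥0∞) (hp : ∀ j, 1 ≤ p j) (hn : 0 < n)
    (h0 : Fin n) (h0def : h0 = ⟨0, hn⟩) (hpfin : p h0 < ⊤)
    (C : ℝ) (hC : 0 < C)
    (hBL : ∀ F : ∀ j : Fin n, SchwartzMap (Fin (k j) → ℝ) ℂ,
      ‖∫ x : Fin m → ℝ, ∏ j : Fin n, F j (I j x)‖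
        ≤ C * ∏ j : Fin n, (eLpNorm (⇑(F j)) (p j) volume).toReal)
    (hnz : ∃ F : ∀ j : Fin n, SchwartzMap (Fin (k j) → ℝ) ℂ,
      (∫ x : Fin m → ℝ, ∏ j : Fin n, F j (I j x)) ≠ 0) :
    Function.Surjective (I h0) :=
  brascamp_lieb_surjectivity_general m n k I p hp h0 hpfin C hBL hnz
end

section
/- Suppose linear maps $I_j : \mathbb{R}^m \to \mathbb{R}^{k_j}$ and exponents $p_j \in (0, \infty]$ satisfy: (i) $\dim V \le \sum_{j=1}^n \frac{1}{p_j}\dim(I_j V)$ for every subspace $V \subseteq \mathbb{R}^m$, (ii) equality holds for $V = \mathbb{R}^m$, and (iii) $p_1 < 1$ with $I_1$ surjective onto $\mathbb{R}^{k_1}$ and $k_1 > 0$. Then a contradiction follows; that is, no such configuration exists. -/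
open ENNReal Module

section

variable {K E ι : Type*} [DivisionRing K] [AddCommGroup E] [Module K E] [FiniteDimensional K E]
  [Fintype ι] [DecidableEq ι] {F : ι → Type*} [∀ j, AddCommGroup (F j)] [∀ j, Module K (F j)]
  (c : ι → ℝ≥0∞) (I : ∀ j, E →ₗ[K] F j)

theorem sum_finrank_map_ker_le (i : ι) :
    ∑ j, c j * (finrank K ((LinearMap.ker (I i)).map (I j)) : ℝ≥0∞)
      ≤ ∑ j ∈ Finset.univ.erase i, c j * (finrank K ((⊤ : Submodule K E).map (I j)) : ℝ≥0∞) := by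
  rw [← Finset.add_sum_erase _ _ (Finset.mem_univ i), LinearMap.le_ker_iff_map.mp le_rfl,
    finrank_bot, Nat.cast_zero, mul_zero, zero_add]
  gcongr with j
  exact Submodule.finrank_mono (Submodule.map_mono le_top)

theorem le_one_of_finrank_le_sum_finrank_map
    (hdim : ∀ V : Submodule K E, (finrank K V : ℝ≥0∞) ≤ ∑ j, c j * finrank K (V.map (I j)))
    (heq : (finrank K E : ℝ≥0∞) = ∑ j, c j * finrank K ((⊤ : Submodule K E).map (I j)))
    {i : ι} (hi : I i ≠ 0) : c i ≤ 1 := by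
  set S := ∑ j ∈ Finset.univ.erase i, c j * (finrank K ((⊤ : Submodule K E).map (I j)) : ℝ≥0∞)
  set r := finrank K ((⊤ : Submodule K E).map (I i))
  have hE : (finrank K E : ℝ≥0∞) = c i * r + S := by
    rw [heq, ← Finset.add_sum_erase _ _ (Finset.mem_univ i)]
  have hS : S ≠ ∞ := ne_top_of_le_ne_top (natCast_ne_top _) (hE ▸ le_add_self)
  have hr : r ≠ 0 := by
    rwa [Ne, Submodule.finrank_eq_zero, Submodule.map_top, LinearMap.range_eq_bot]
  -- Rank–nullity and the dimension condition for `ker (I i)` give `dim E ≤ r + S`.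
  have hle : c i * r + S ≤ r + S := by
    rw [← hE, ← (I i).finrank_range_add_finrank_ker, Nat.cast_add, ← Submodule.map_top]
    gcongr
    exact (hdim _).trans (sum_finrank_map_ker_le c I i)
  have hcr : c i * r ≤ 1 * r := by
    rwa [one_mul, ← ENNReal.add_le_add_iff_right hS]
  exact (ENNReal.mul_le_mul_iff_left (by exact_mod_cast hr) (natCast_ne_top r)).mp hcr

end

theorem no_brascamp_lieb_with_exponent_below_one_general
    (m n : ℕ) (k : Fin n → ℕ)
    (I : ∀ j : Fin n, (Fin m → ℝ) →ₗ[ℝ] (Fin (k j) → ℝ))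
    (p : Fin n → ℝ≥0∞)
    (hdim : ∀ V : Submodule ℝ (Fin m → ℝ),
      (finrank ℝ V : ℝ≥0∞)
        ≤ ∑ j : Fin n, (p j)⁻¹ * (finrank ℝ (V.map (I j)) : ℝ≥0∞))
    (heq : (m : ℝ≥0∞)
      = ∑ j : Fin n, (p j)⁻¹
          * (finrank ℝ ((⊤ : Submodule ℝ (Fin m → ℝ)).map (I j)) : ℝ≥0∞))
    (j0 : Fin n)
    (hp0 : p j0 < 1) (hsurj : Function.Surjective (I j0)) (hk0 : 0 < k j0) :
    False := by
  have : Nonempty (Fin (k j0)) := Fin.pos_iff_nonempty.mp hk0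
  have hm : (finrank ℝ (Fin m → ℝ) : ℝ≥0∞) = m := by rw [finrank_fin_fun]
  exact (ENNReal.one_lt_inv.mpr hp0).not_ge
    (le_one_of_finrank_le_sum_finrank_map (fun j ↦ (p j)⁻¹) I hdim (hm.trans heq)
      (LinearMap.ne_zero_of_surjective hsurj))

/-- No Brascamp–Lieb datum can satisfy the dimensional conditions with an
exponent `p 0 < 1`, `I 0` surjective and `k 0 > 0`. -/
theorem no_brascamp_lieb_with_exponent_below_one
    (m n : ℕ) (k : Fin n → ℕ) (hn : 0 < n)
    (I : ∀ j : Fin n, (Fin m → ℝ) →ₗ[ℝ] (Fin (k j) → ℝ))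
    (p : Fin n → ℝ≥0∞) (hp : ∀ j, 0 < p j)
    (hdim : ∀ V : Submodule ℝ (Fin m → ℝ),
      (finrank ℝ V : ℝ≥0∞)
        ≤ ∑ j : Fin n, (p j)⁻¹ * (finrank ℝ (V.map (I j)) : ℝ≥0∞))
    (heq : (m : ℝ≥0∞)
      = ∑ j : Fin n, (p j)⁻¹
          * (finrank ℝ ((⊤ : Submodule ℝ (Fin m → ℝ)).map (I j)) : ℝ≥0∞))
    (j0 : Fin n) (hj0 : j0 = ⟨0, hn⟩)
    (hp0 : p j0 < 1) (hsurj : Function.Surjective (I j0)) (hk0 : 0 < k j0) :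
    False :=
  no_brascamp_lieb_with_exponent_below_one_general m n k I p hdim heq j0 hp0 hsurj hk0
end
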